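/- arXiv:2210.05084 — 4 statements merged into one kernel-verified Lean document; each statement's English description precedes it below -/
import Mathlib

section
/- The KL divergence D(Q₁‖Q₀) between Q₁, the equal mixture of two bivariate Gaussians N((μ_x, μ_y), σ²I) and N((−μ_x, −μ_y), σ²I), and Q₀ = N((0,0), σ²I), equals −(μ_x² + μ_y²)/(2σ²) + E_{Q₁}[log cosh((μ_x X + μ_y Y)/σ²)], where (X,Y) ∼ Q₁. -/
open Real MeasureTheory

/-! Each component of `Q₁` is `Q₀` times `exp (-|μ|² / (2σ²) ± ⟨μ, z⟩ / σ²)`, so the likelihood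
ratio is `Q₁ / Q₀ = exp (-|μ|² / (2σ²)) * cosh (⟨μ, z⟩ / σ²)`. Taking logarithms splits the KL
integrand into `-|μ|² / (2σ²) * Q₁`, which integrates to the constant since `Q₁` is a probability
density, and `Q₁ * log cosh (⟨μ, z⟩ / σ²)`, which is integrable because `0 ≤ log cosh t ≤ |t|` and
Gaussians have finite first moments. -/

lemma abs_log_cosh_le (t : ℝ) : |log (cosh t)| ≤ |t| := by
  rw [abs_of_nonneg (log_nonneg (one_le_cosh t))]
  have hcosh : cosh t ≤ exp |t| := by
    rw [cosh_eq]
    linarith [exp_le_exp.mpr (le_abs_self t), exp_le_exp.mpr (neg_le_abs t)]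
  simpa using log_le_log (cosh_pos t) hcosh

lemma abs_log_cosh_div_le (m n σ x y : ℝ) :
    |log (cosh ((m * x + n * y) / σ ^ 2))| ≤ (|m| + |n|) / σ ^ 2 * (|x| + |y|) := by
  have hlin : |m * x + n * y| ≤ (|m| + |n|) * (|x| + |y|) :=
    calc |m * x + n * y| ≤ |m| * |x| + |n| * |y| := by
          simpa only [abs_mul] using abs_add_le (m * x) (n * y)
      _ ≤ (|m| + |n|) * (|x| + |y|) := by
          nlinarith [abs_nonneg m, abs_nonneg n, abs_nonneg x, abs_nonneg y]
  refine (abs_log_cosh_le _).trans ?_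
  rw [abs_div, abs_of_nonneg (sq_nonneg σ), div_mul_eq_mul_div]
  gcongr

section ShiftedGaussian

variable {a : ℝ}

lemma integrable_exp_neg_mul_sub_sq (ha : 0 < a) (m : ℝ) :
    Integrable (fun x : ℝ => exp (-a * (x - m) ^ 2)) :=
  (integrable_exp_neg_mul_sq ha).comp_sub_right m

lemma integral_exp_neg_mul_sub_sq (m : ℝ) :
    ∫ x : ℝ, exp (-a * (x - m) ^ 2) = √(π / a) := by
  rw [integral_sub_right_eq_self (fun x => exp (-a * x ^ 2)) m, integral_gaussian]

lemma integrable_abs_mul_exp_neg_mul_sub_sq (ha : 0 < a) (m : ℝ) :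
    Integrable (fun x : ℝ => |x| * exp (-a * (x - m) ^ 2)) := by
  have hshift : Integrable (fun x : ℝ => (x + m) * exp (-a * x ^ 2)) := by
    simpa only [Pi.add_def, add_mul] using
      (integrable_mul_exp_neg_mul_sq ha).add ((integrable_exp_neg_mul_sq ha).const_mul m)
  simpa [abs_mul] using (hshift.comp_sub_right m).abs

end ShiftedGaussian

noncomputable def isoGaussianPDF (σ m n x y : ℝ) : ℝ :=
  1 / (2 * π * σ ^ 2) * exp (-((x - m) ^ 2 + (y - n) ^ 2) / (2 * σ ^ 2))

noncomputable def symmMixturePDF (σ m n x y : ℝ) : ℝ :=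
  (isoGaussianPDF σ m n x y + isoGaussianPDF σ (-m) (-n) x y) / 2

section IsoGaussian

variable {σ : ℝ}

lemma isoGaussianPDF_eq_mul (m n x y : ℝ) :
    isoGaussianPDF σ m n x y = 1 / (2 * π * σ ^ 2) *
      (exp (-(2 * σ ^ 2)⁻¹ * (x - m) ^ 2) * exp (-(2 * σ ^ 2)⁻¹ * (y - n) ^ 2)) := by
  rw [isoGaussianPDF, ← exp_add]
  ring_nf

lemma isoGaussianPDF_pos (hσ : σ ≠ 0) (m n x y : ℝ) : 0 < isoGaussianPDF σ m n x y := by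
  unfold isoGaussianPDF
  positivity

lemma isoGaussianPDF_eq_mul_exp (hσ : σ ≠ 0) (m n x y : ℝ) :
    isoGaussianPDF σ m n x y = isoGaussianPDF σ 0 0 x y *
      exp (-(m ^ 2 + n ^ 2) / (2 * σ ^ 2)) * exp ((m * x + n * y) / σ ^ 2) := by
  simp only [isoGaussianPDF, mul_assoc, ← exp_add]
  congr 2
  field_simp
  ring

lemma integrable_isoGaussianPDF (hσ : σ ≠ 0) (m n : ℝ) :
    Integrable (fun p : ℝ × ℝ => isoGaussianPDF σ m n p.1 p.2) (volume.prod volume) := by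
  have ha : 0 < (2 * σ ^ 2)⁻¹ := by positivity
  simp only [isoGaussianPDF_eq_mul]
  exact ((integrable_exp_neg_mul_sub_sq ha m).mul_prod
    (integrable_exp_neg_mul_sub_sq ha n)).const_mul _

lemma integral_isoGaussianPDF (hσ : σ ≠ 0) (m n : ℝ) :
    ∫ p : ℝ × ℝ, isoGaussianPDF σ m n p.1 p.2 ∂(volume.prod volume) = 1 := by
  have hπa : 0 ≤ π / (2 * σ ^ 2)⁻¹ := by positivity
  simp only [isoGaussianPDF_eq_mul]
  rw [integral_const_mul, integral_prod_mul (fun x => exp (-(2 * σ ^ 2)⁻¹ * (x - m) ^ 2))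
    (fun y => exp (-(2 * σ ^ 2)⁻¹ * (y - n) ^ 2)), integral_exp_neg_mul_sub_sq,
    integral_exp_neg_mul_sub_sq, mul_self_sqrt hπa]
  field_simp

lemma integrable_abs_add_abs_mul_isoGaussianPDF (hσ : σ ≠ 0) (m n : ℝ) :
    Integrable (fun p : ℝ × ℝ => (|p.1| + |p.2|) * isoGaussianPDF σ m n p.1 p.2)
      (volume.prod volume) := by
  have ha : 0 < (2 * σ ^ 2)⁻¹ := by positivity
  have hfst := (integrable_abs_mul_exp_neg_mul_sub_sq ha m).mul_prod
    (integrable_exp_neg_mul_sub_sq ha n)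
  have hsnd := (integrable_exp_neg_mul_sub_sq ha m).mul_prod
    (integrable_abs_mul_exp_neg_mul_sub_sq ha n)
  refine ((hfst.add hsnd).const_mul (1 / (2 * π * σ ^ 2))).congr (ae_of_all _ fun p => ?_)
  simp only [isoGaussianPDF_eq_mul, Pi.add_apply]
  ring

end IsoGaussian

section SymmMixture

variable {σ : ℝ}

lemma symmMixturePDF_eq_mul_cosh (hσ : σ ≠ 0) (m n x y : ℝ) :
    symmMixturePDF σ m n x y = isoGaussianPDF σ 0 0 x y *
      (exp (-(m ^ 2 + n ^ 2) / (2 * σ ^ 2)) * cosh ((m * x + n * y) / σ ^ 2)) := by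
  rw [symmMixturePDF, isoGaussianPDF_eq_mul_exp hσ m, isoGaussianPDF_eq_mul_exp hσ (-m),
    cosh_eq]
  ring_nf

lemma symmMixturePDF_mul_log_div (hσ : σ ≠ 0) (m n x y : ℝ) :
    symmMixturePDF σ m n x y * log (symmMixturePDF σ m n x y / isoGaussianPDF σ 0 0 x y) =
      -(m ^ 2 + n ^ 2) / (2 * σ ^ 2) * symmMixturePDF σ m n x y +
        symmMixturePDF σ m n x y * log (cosh ((m * x + n * y) / σ ^ 2)) := by
  rw [symmMixturePDF_eq_mul_cosh hσ, mul_div_cancel_left₀ _ (isoGaussianPDF_pos hσ 0 0 x y).ne',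
    log_mul (exp_pos _).ne' (cosh_pos _).ne', log_exp]
  ring

lemma integrable_symmMixturePDF (hσ : σ ≠ 0) (m n : ℝ) :
    Integrable (fun p : ℝ × ℝ => symmMixturePDF σ m n p.1 p.2) (volume.prod volume) :=
  ((integrable_isoGaussianPDF hσ m n).add (integrable_isoGaussianPDF hσ (-m) (-n))).div_const 2

lemma integral_integral_symmMixturePDF (hσ : σ ≠ 0) (m n : ℝ) :
    ∫ x, ∫ y, symmMixturePDF σ m n x y = 1 := by
  rw [integral_integral (integrable_symmMixturePDF hσ m n)]
  simp only [symmMixturePDF]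
  rw [integral_div, integral_add (integrable_isoGaussianPDF hσ m n)
    (integrable_isoGaussianPDF hσ (-m) (-n)), integral_isoGaussianPDF hσ,
    integral_isoGaussianPDF hσ]
  norm_num

lemma integrable_symmMixturePDF_mul_log_cosh (hσ : σ ≠ 0) (m n : ℝ) :
    Integrable (fun p : ℝ × ℝ =>
      symmMixturePDF σ m n p.1 p.2 * log (cosh ((m * p.1 + n * p.2) / σ ^ 2)))
      (volume.prod volume) := by
  have hbound : Integrable (fun p : ℝ × ℝ =>
      (|m| + |n|) / σ ^ 2 * ((|p.1| + |p.2|) * symmMixturePDF σ m n p.1 p.2))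
      (volume.prod volume) := by
    refine ((((integrable_abs_add_abs_mul_isoGaussianPDF hσ m n).add
      (integrable_abs_add_abs_mul_isoGaussianPDF hσ (-m) (-n))).div_const 2).const_mul
      ((|m| + |n|) / σ ^ 2)).congr (ae_of_all _ fun p => ?_)
    simp only [symmMixturePDF, Pi.add_apply]
    ring
  have hmeas : Measurable (fun p : ℝ × ℝ =>
      symmMixturePDF σ m n p.1 p.2 * log (cosh ((m * p.1 + n * p.2) / σ ^ 2))) := by
    unfold symmMixturePDF isoGaussianPDF
    fun_prop
  refine hbound.mono' hmeas.aestronglyMeasurable (ae_of_all _ fun p => ?_)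
  have hM : 0 ≤ symmMixturePDF σ m n p.1 p.2 := by
    unfold symmMixturePDF
    linarith [isoGaussianPDF_pos hσ m n p.1 p.2, isoGaussianPDF_pos hσ (-m) (-n) p.1 p.2]
  have hlog := abs_log_cosh_div_le m n σ p.1 p.2
  calc ‖symmMixturePDF σ m n p.1 p.2 * log (cosh ((m * p.1 + n * p.2) / σ ^ 2))‖
      = symmMixturePDF σ m n p.1 p.2 * |log (cosh ((m * p.1 + n * p.2) / σ ^ 2))| := by
        rw [norm_mul, norm_of_nonneg hM, norm_eq_abs]
    _ ≤ symmMixturePDF σ m n p.1 p.2 * ((|m| + |n|) / σ ^ 2 * (|p.1| + |p.2|)) := by gcongr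
    _ = (|m| + |n|) / σ ^ 2 * ((|p.1| + |p.2|) * symmMixturePDF σ m n p.1 p.2) := by ring

theorem kl_mixture_gaussian_general (σ μx μy : ℝ) (hσ : 0 < σ)
    (Q₀ Q₁ : ℝ → ℝ → ℝ)
    (hQ₀ : Q₀ = fun x y => (1 / (2 * Real.pi * σ ^ 2)) * Real.exp (-(x ^ 2 + y ^ 2) / (2 * σ ^ 2)))
    (hQ₁ : Q₁ = fun x y => (1 / 2) * (1 / (2 * Real.pi * σ ^ 2)) *
      (Real.exp (-((x - μx) ^ 2 + (y - μy) ^ 2) / (2 * σ ^ 2)) +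
       Real.exp (-((x + μx) ^ 2 + (y + μy) ^ 2) / (2 * σ ^ 2)))) :
    (∫ x : ℝ, ∫ y : ℝ, Q₁ x y * Real.log (Q₁ x y / Q₀ x y))
      = -(μx ^ 2 + μy ^ 2) / (2 * σ ^ 2)
        + ∫ x : ℝ, ∫ y : ℝ, Q₁ x y * Real.log (Real.cosh ((μx * x + μy * y) / σ ^ 2)) := by
  have hQ₀' : Q₀ = isoGaussianPDF σ 0 0 := by
    subst hQ₀; funext x y; simp [isoGaussianPDF]
  have hQ₁' : Q₁ = symmMixturePDF σ μx μy := by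
    subst hQ₁; funext x y; simp only [symmMixturePDF, isoGaussianPDF, sub_neg_eq_add]; ring
  subst hQ₀' hQ₁'
  simp_rw [symmMixturePDF_mul_log_div hσ.ne']
  rw [integral_integral_add ((integrable_symmMixturePDF hσ.ne' μx μy).const_mul _)
    (integrable_symmMixturePDF_mul_log_cosh hσ.ne' μx μy)]
  simp only [integral_const_mul, integral_integral_symmMixturePDF hσ.ne', mul_one]

theorem kl_mixture_gaussian (σ μx μy : ℝ) (hσ : 0 < σ) (hμ : (μx, μy) ≠ (0, 0))
    (Q₀ Q₁ : ℝ → ℝ → ℝ)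
    (hQ₀ : Q₀ = fun x y => (1 / (2 * Real.pi * σ ^ 2)) * Real.exp (-(x ^ 2 + y ^ 2) / (2 * σ ^ 2)))
    (hQ₁ : Q₁ = fun x y => (1 / 2) * (1 / (2 * Real.pi * σ ^ 2)) *
      (Real.exp (-((x - μx) ^ 2 + (y - μy) ^ 2) / (2 * σ ^ 2)) +
       Real.exp (-((x + μx) ^ 2 + (y + μy) ^ 2) / (2 * σ ^ 2)))) :
    (∫ x : ℝ, ∫ y : ℝ, Q₁ x y * Real.log (Q₁ x y / Q₀ x y))
      = -(μx ^ 2 + μy ^ 2) / (2 * σ ^ 2)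
        + ∫ x : ℝ, ∫ y : ℝ, Q₁ x y * Real.log (Real.cosh ((μx * x + μy * y) / σ ^ 2)) :=
  kl_mixture_gaussian_general σ μx μy hσ Q₀ Q₁ hQ₀ hQ₁
end SymmMixture
end

section
/- Let Q_t and Q_p be equal mixtures of two bivariate Gaussians with means ±(Aβ cos Θ_t, Aβ sin Θ_t) and ±(Aβ cos Θ_p, Aβ sin Θ_p) respectively, all with covariance σ²I, and Q₀ = N(0, σ²I). Then ∫∫ Q_t(x,y)·Q_p(x,y)/Q₀(x,y) dx dy = cosh(A²β² cos(Θ_p − Θ_t)/σ²). -/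
/-!
Dividing a product of two Gaussian bumps by the centred one gives another bump:
`φ_p φ_q / φ_0 = exp (⟪p, q⟫ / σ²) φ_{p+q}`, because the exponent is a quadratic
polynomial whose cross term is `⟪p, q⟫`. Expanding the two mixtures therefore leaves
four bumps with weights `e^c, e^c, e^{-c}, e^{-c}`, each of total mass one after
normalisation, and the average of these weights is `cosh c`.
-/

open Real MeasureTheory

noncomputable section

def gaussBump (σ : ℝ) (m z : ℝ × ℝ) : ℝ :=
  exp (-((z.1 - m.1) ^ 2 + (z.2 - m.2) ^ 2) / (2 * σ ^ 2))

def gaussDensity (σ : ℝ) (z : ℝ × ℝ) : ℝ :=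
  1 / (2 * π * σ ^ 2) * gaussBump σ 0 z

def gaussMixture (σ : ℝ) (m z : ℝ × ℝ) : ℝ :=
  1 / 2 * (1 / (2 * π * σ ^ 2)) * (gaussBump σ m z + gaussBump σ (-m) z)

lemma integral_exp_neg_sub_sq_div {σ : ℝ} (hσ : σ ≠ 0) (c : ℝ) :
    ∫ x : ℝ, exp (-(x - c) ^ 2 / (2 * σ ^ 2)) = √(2 * π * σ ^ 2) := by
  have h := integral_sub_right_eq_self (μ := volume)
    (fun x : ℝ => exp (-(1 / (2 * σ ^ 2)) * x ^ 2)) c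
  simp only [integral_gaussian] at h
  convert h using 3 with x
  · ring_nf
  · field_simp

lemma integrable_exp_neg_sub_sq_div {σ : ℝ} (hσ : σ ≠ 0) (c : ℝ) :
    Integrable fun x : ℝ => exp (-(x - c) ^ 2 / (2 * σ ^ 2)) := by
  convert (integrable_exp_neg_mul_sq (b := 1 / (2 * σ ^ 2)) (by positivity)).comp_sub_right c
    using 2 with x
  ring_nf

lemma gaussBump_eq_mul (σ : ℝ) (m z : ℝ × ℝ) :
    gaussBump σ m z =
      exp (-(z.1 - m.1) ^ 2 / (2 * σ ^ 2)) * exp (-(z.2 - m.2) ^ 2 / (2 * σ ^ 2)) := by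
  rw [gaussBump, ← exp_add]
  congr 1
  ring

lemma integrable_gaussBump {σ : ℝ} (hσ : σ ≠ 0) (m : ℝ × ℝ) :
    Integrable (gaussBump σ m) (volume.prod volume) := by
  simp only [funext (gaussBump_eq_mul σ m)]
  exact (integrable_exp_neg_sub_sq_div hσ m.1).mul_prod (integrable_exp_neg_sub_sq_div hσ m.2)

lemma integral_gaussBump {σ : ℝ} (hσ : σ ≠ 0) (m : ℝ × ℝ) :
    ∫ z, gaussBump σ m z ∂(volume.prod volume) = 2 * π * σ ^ 2 := by
  simp only [gaussBump_eq_mul]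
  rw [integral_prod_mul (fun x : ℝ => exp (-(x - m.1) ^ 2 / (2 * σ ^ 2)))
      (fun y : ℝ => exp (-(y - m.2) ^ 2 / (2 * σ ^ 2))),
    integral_exp_neg_sub_sq_div hσ, integral_exp_neg_sub_sq_div hσ,
    mul_self_sqrt (by positivity)]

lemma gaussBump_mul_gaussBump_div (σ : ℝ) (p q z : ℝ × ℝ) :
    gaussBump σ p z * gaussBump σ q z / gaussBump σ 0 z =
      exp ((p.1 * q.1 + p.2 * q.2) / σ ^ 2) * gaussBump σ (p + q) z := by
  simp only [gaussBump, ← exp_add, ← exp_sub, Prod.fst_add, Prod.snd_add, Prod.fst_zero,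
    Prod.snd_zero]
  congr 1
  ring

lemma gaussMixture_mul_gaussMixture_div (σ : ℝ) (p q z : ℝ × ℝ) :
    gaussMixture σ p z * gaussMixture σ q z / gaussDensity σ z =
      1 / (8 * π * σ ^ 2) *
        (exp ((p.1 * q.1 + p.2 * q.2) / σ ^ 2) *
            (gaussBump σ (p + q) z + gaussBump σ (-(p + q)) z) +
          exp (-((p.1 * q.1 + p.2 * q.2) / σ ^ 2)) *
            (gaussBump σ (p - q) z + gaussBump σ (-(p - q)) z)) := by
  have h0 : gaussBump σ 0 z ≠ 0 := (exp_pos _).ne'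
  have expand (a b c d e N : ℝ) (he : e ≠ 0) :
      1 / 2 * N * (a + b) * (1 / 2 * N * (c + d)) / (N * e) =
        N / 4 * (a * c / e + b * d / e + (a * d / e + b * c / e)) := by
    rcases eq_or_ne N 0 with rfl | hN
    · simp
    · field_simp
      ring
  rw [gaussMixture, gaussMixture, gaussDensity, expand _ _ _ _ _ _ h0]
  simp only [gaussBump_mul_gaussBump_div, Prod.fst_neg, Prod.snd_neg, neg_add, ← sub_eq_add_neg]
  field_simp
  ring_nf

lemma integral_gaussMixture_mul_gaussMixture_div {σ : ℝ} (hσ : σ ≠ 0) (p q : ℝ × ℝ) :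
    ∫ x : ℝ, ∫ y : ℝ,
        gaussMixture σ p (x, y) * gaussMixture σ q (x, y) / gaussDensity σ (x, y) =
      cosh ((p.1 * q.1 + p.2 * q.2) / σ ^ 2) := by
  set c := (p.1 * q.1 + p.2 * q.2) / σ ^ 2
  have hint (m₁ m₂ : ℝ × ℝ) :
      Integrable (fun z => gaussBump σ m₁ z + gaussBump σ m₂ z) (volume.prod volume) :=
    (integrable_gaussBump hσ m₁).add (integrable_gaussBump hσ m₂)
  simp only [gaussMixture_mul_gaussMixture_div]
  refine (integral_prod (fun z => 1 / (8 * π * σ ^ 2) *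
      (exp c * (gaussBump σ (p + q) z + gaussBump σ (-(p + q)) z) +
        exp (-c) * (gaussBump σ (p - q) z + gaussBump σ (-(p - q)) z)))
    ((((hint _ _).const_mul _).add ((hint _ _).const_mul _)).const_mul _)).symm.trans ?_
  rw [integral_const_mul, integral_add ((hint _ _).const_mul _) ((hint _ _).const_mul _),
    integral_const_mul, integral_const_mul, integral_add (integrable_gaussBump hσ _)
      (integrable_gaussBump hσ _), integral_add (integrable_gaussBump hσ _)
      (integrable_gaussBump hσ _)]
  simp only [integral_gaussBump hσ, cosh_eq]
  field_simp
  ring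

theorem cross_integral_cosh_general (A β σ Θt Θp : ℝ) (hσ : 0 < σ)
    (Q : ℝ → ℝ → ℝ → ℝ) (Q₀ : ℝ → ℝ → ℝ)
    (hQ : Q = fun Θ x y => (1 / 2) * (1 / (2 * Real.pi * σ ^ 2)) *
      (Real.exp (-((x - A * β * Real.cos Θ) ^ 2 + (y - A * β * Real.sin Θ) ^ 2) / (2 * σ ^ 2)) +
       Real.exp (-((x + A * β * Real.cos Θ) ^ 2 + (y + A * β * Real.sin Θ) ^ 2) / (2 * σ ^ 2))))
    (hQ₀ : Q₀ = fun x y => (1 / (2 * Real.pi * σ ^ 2)) *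
      Real.exp (-(x ^ 2 + y ^ 2) / (2 * σ ^ 2))) :
    (∫ x : ℝ, ∫ y : ℝ, Q Θt x y * Q Θp x y / Q₀ x y)
      = Real.cosh (A ^ 2 * β ^ 2 * Real.cos (Θp - Θt) / σ ^ 2) := by
  subst hQ hQ₀
  convert integral_gaussMixture_mul_gaussMixture_div hσ.ne'
    (A * β * cos Θt, A * β * sin Θt) (A * β * cos Θp, A * β * sin Θp) using 2
  · simp only [gaussMixture, gaussDensity, gaussBump, Prod.fst_neg, Prod.snd_neg, sub_neg_eq_add,
      Prod.fst_zero, Prod.snd_zero, sub_zero]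
  · rw [cos_sub]
    ring

theorem cross_integral_cosh (A β σ Θt Θp : ℝ) (hA : 0 < A) (hβ : 0 < β) (hσ : 0 < σ)
    (Q : ℝ → ℝ → ℝ → ℝ) (Q₀ : ℝ → ℝ → ℝ)
    (hQ : Q = fun Θ x y => (1 / 2) * (1 / (2 * Real.pi * σ ^ 2)) *
      (Real.exp (-((x - A * β * Real.cos Θ) ^ 2 + (y - A * β * Real.sin Θ) ^ 2) / (2 * σ ^ 2)) +
       Real.exp (-((x + A * β * Real.cos Θ) ^ 2 + (y + A * β * Real.sin Θ) ^ 2) / (2 * σ ^ 2))))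
    (hQ₀ : Q₀ = fun x y => (1 / (2 * Real.pi * σ ^ 2)) *
      Real.exp (-(x ^ 2 + y ^ 2) / (2 * σ ^ 2))) :
    (∫ x : ℝ, ∫ y : ℝ, Q Θt x y * Q Θp x y / Q₀ x y)
      = Real.cosh (A ^ 2 * β ^ 2 * Real.cos (Θp - Θt) / σ ^ 2) :=
  cross_integral_cosh_general A β σ Θt Θp hσ Q Q₀ hQ hQ₀
end
end

section
/- Let Q_t, Q_p, Q_z be equal mixtures of two bivariate Gaussians with means ±(Aβ cos Θ_t, Aβ sin Θ_t), ±(Aβ cos Θ_p, Aβ sin Θ_p), ±(Aβ cos Θ_z, Aβ sin Θ_z), all with covariance σ²I, and Q₀ = N(0, σ²I). Then ∫∫ Q_t·Q_p·Q_z/Q₀² dx dy = (1/4)·[exp(−γ(−cos(Δ_tp − Δ_tz) − cos Δ_tp − cos Δ_tz)) + exp(−γ(−cos(Δ_tp − Δ_tz) + cos Δ_tp + cos Δ_tz)) + exp(−γ(cos(Δ_tp − Δ_tz) + cos Δ_tp − cos Δ_tz)) + exp(−γ(cos(Δ_tp − Δ_tz) − cos Δ_tp + cos Δ_tz))], where γ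 = A²β²/σ² and Δ_tp = Θ_t − Θ_p, Δ_tz = Θ_t − Θ_z. -/
/-!
Each `Q_Θ` is the average of the Gaussian densities with means `±Aβ (cos Θ, sin Θ)`, so the
integrand splits into eight terms `φ_{μ₁} φ_{μ₂} φ_{μ₃} / φ₀²`. Completing the square in each
coordinate, `φ_a φ_b φ_c / φ₀² = exp ((ab + ac + bc) / σ²) φ_{a+b+c}`, so such a term integrates to
`exp ((⟪μ₁, μ₂⟫ + ⟪μ₁, μ₃⟫ + ⟪μ₂, μ₃⟫) / σ²)` with `⟪μᵢ, μⱼ⟫ = ±A²β² cos (Θᵢ - Θⱼ)`. Flipping all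
three signs leaves this unchanged, so the eight terms pair up into the four exponentials.
-/

open Real MeasureTheory ProbabilityTheory
open scoped NNReal

variable {v : ℝ≥0}

lemma gaussianPDFReal_mul_mul_div_sq (hv : v ≠ 0) (a b c x : ℝ) :
    gaussianPDFReal a v x * gaussianPDFReal b v x * gaussianPDFReal c v x /
        gaussianPDFReal 0 v x ^ 2
      = exp ((a * b + a * c + b * c) / v) * gaussianPDFReal (a + b + c) v x := by
  have hv' : (v : ℝ) ≠ 0 := by exact_mod_cast hv
  have hs : √(2 * π * v) ≠ 0 := by positivity
  simp only [gaussianPDFReal]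
  field_simp
  rw [← exp_nat_mul, ← exp_add, ← exp_add, ← exp_add, ← exp_add]
  congr 1
  field_simp
  ring

lemma integrable_gaussianPDFReal_mul_mul_div_sq (hv : v ≠ 0) (a b c : ℝ) :
    Integrable fun x ↦ gaussianPDFReal a v x * gaussianPDFReal b v x *
      gaussianPDFReal c v x / gaussianPDFReal 0 v x ^ 2 := by
  simp only [gaussianPDFReal_mul_mul_div_sq hv]
  exact (integrable_gaussianPDFReal _ _).const_mul _

lemma integral_gaussianPDFReal_mul_mul_div_sq (hv : v ≠ 0) (a b c : ℝ) :
    ∫ x, gaussianPDFReal a v x * gaussianPDFReal b v x * gaussianPDFReal c v x /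
        gaussianPDFReal 0 v x ^ 2 = exp ((a * b + a * c + b * c) / v) := by
  simp only [gaussianPDFReal_mul_mul_div_sq hv, integral_const_mul,
    integral_gaussianPDFReal_eq_one _ hv, mul_one]

lemma integral_integral_mul (f g : ℝ → ℝ) :
    ∫ x, ∫ y, f x * g y = (∫ x, f x) * ∫ y, g y := by
  simp only [integral_const_mul, integral_mul_const]

lemma integral_integral_finsetSum {ι : Type*} (s : Finset ι) {F : ι → ℝ → ℝ → ℝ}
    (hF : ∀ i ∈ s, ∀ x, Integrable (F i x))
    (hF' : ∀ i ∈ s, Integrable fun x ↦ ∫ y, F i x y) :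
    ∫ x, ∫ y, ∑ i ∈ s, F i x y = ∑ i ∈ s, ∫ x, ∫ y, F i x y := by
  simp only [fun x ↦ integral_finsetSum s fun i hi ↦ hF i hi x]
  exact integral_finsetSum s hF'

noncomputable def polarGaussianPDF (v : ℝ≥0) (r θ x y : ℝ) : ℝ :=
  gaussianPDFReal (r * cos θ) v x * gaussianPDFReal (r * sin θ) v y

lemma polarGaussianPDF_eq (v : ℝ≥0) (r θ x y : ℝ) :
    polarGaussianPDF v r θ x y =
      1 / (2 * π * v) * exp (-((x - r * cos θ) ^ 2 + (y - r * sin θ) ^ 2) / (2 * v)) := by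
  rw [polarGaussianPDF, gaussianPDFReal, gaussianPDFReal, mul_mul_mul_comm, ← exp_add,
    ← mul_inv, mul_self_sqrt (by positivity), one_div, neg_add, add_div]

lemma polarGaussianPDF_mul_mul_div_sq (v : ℝ≥0) (r₁ r₂ r₃ θ₁ θ₂ θ₃ x y : ℝ) :
    polarGaussianPDF v r₁ θ₁ x y * polarGaussianPDF v r₂ θ₂ x y * polarGaussianPDF v r₃ θ₃ x y /
        polarGaussianPDF v 0 0 x y ^ 2 =
      (gaussianPDFReal (r₁ * cos θ₁) v x * gaussianPDFReal (r₂ * cos θ₂) v x *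
          gaussianPDFReal (r₃ * cos θ₃) v x / gaussianPDFReal 0 v x ^ 2) *
        (gaussianPDFReal (r₁ * sin θ₁) v y * gaussianPDFReal (r₂ * sin θ₂) v y *
          gaussianPDFReal (r₃ * sin θ₃) v y / gaussianPDFReal 0 v y ^ 2) := by
  simp only [polarGaussianPDF, zero_mul]
  ring

lemma integral_integral_polarGaussianPDF_mul_mul_div_sq (hv : v ≠ 0) (r₁ r₂ r₃ θ₁ θ₂ θ₃ : ℝ) :
    ∫ x, ∫ y, polarGaussianPDF v r₁ θ₁ x y * polarGaussianPDF v r₂ θ₂ x y *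
        polarGaussianPDF v r₃ θ₃ x y / polarGaussianPDF v 0 0 x y ^ 2 =
      exp ((r₁ * r₂ * cos (θ₁ - θ₂) + r₁ * r₃ * cos (θ₁ - θ₃) + r₂ * r₃ * cos (θ₂ - θ₃)) / v) := by
  simp only [polarGaussianPDF_mul_mul_div_sq, integral_integral_mul,
    integral_gaussianPDFReal_mul_mul_div_sq hv, ← exp_add, cos_sub]
  congr 1
  ring

lemma integrable_polarGaussianPDF_mul_mul_div_sq (hv : v ≠ 0) (r₁ r₂ r₃ θ₁ θ₂ θ₃ x : ℝ) :
    Integrable fun y ↦ polarGaussianPDF v r₁ θ₁ x y * polarGaussianPDF v r₂ θ₂ x y *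
        polarGaussianPDF v r₃ θ₃ x y / polarGaussianPDF v 0 0 x y ^ 2 := by
  simp only [polarGaussianPDF_mul_mul_div_sq]
  exact (integrable_gaussianPDFReal_mul_mul_div_sq hv _ _ _).const_mul _

lemma integrable_integral_polarGaussianPDF_mul_mul_div_sq (hv : v ≠ 0) (r₁ r₂ r₃ θ₁ θ₂ θ₃ : ℝ) :
    Integrable fun x ↦ ∫ y, polarGaussianPDF v r₁ θ₁ x y * polarGaussianPDF v r₂ θ₂ x y *
        polarGaussianPDF v r₃ θ₃ x y / polarGaussianPDF v 0 0 x y ^ 2 := by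
  simp only [polarGaussianPDF_mul_mul_div_sq, integral_const_mul]
  exact (integrable_gaussianPDFReal_mul_mul_div_sq hv _ _ _).mul_const _

theorem triple_product_integral_general (A β σ Θt Θp Θz : ℝ) (hσ : 0 < σ)
    (Q : ℝ → ℝ → ℝ → ℝ) (Q₀ : ℝ → ℝ → ℝ)
    (hQ : Q = fun Θ x y => (1 / 2) * (1 / (2 * Real.pi * σ ^ 2)) *
      (Real.exp (-((x - A * β * Real.cos Θ) ^ 2 + (y - A * β * Real.sin Θ) ^ 2) / (2 * σ ^ 2)) +
       Real.exp (-((x + A * β * Real.cos Θ) ^ 2 + (y + A * β * Real.sin Θ) ^ 2) / (2 * σ ^ 2))))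
    (hQ₀ : Q₀ = fun x y => (1 / (2 * Real.pi * σ ^ 2)) *
      Real.exp (-(x ^ 2 + y ^ 2) / (2 * σ ^ 2)))
    (γ Δtp Δtz : ℝ) (hγ : γ = A ^ 2 * β ^ 2 / σ ^ 2)
    (hΔtp : Δtp = Θt - Θp) (hΔtz : Δtz = Θt - Θz) :
    (∫ x : ℝ, ∫ y : ℝ, Q Θt x y * Q Θp x y * Q Θz x y / (Q₀ x y) ^ 2)
      = (1 / 4) *
        (Real.exp (-γ * (-Real.cos (Δtp - Δtz) - Real.cos Δtp - Real.cos Δtz)) +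
         Real.exp (-γ * (-Real.cos (Δtp - Δtz) + Real.cos Δtp + Real.cos Δtz)) +
         Real.exp (-γ * (Real.cos (Δtp - Δtz) + Real.cos Δtp - Real.cos Δtz)) +
         Real.exp (-γ * (Real.cos (Δtp - Δtz) - Real.cos Δtp + Real.cos Δtz))) := by
  obtain ⟨v, hvσ⟩ : ∃ v : ℝ≥0, (v : ℝ) = σ ^ 2 := ⟨⟨σ ^ 2, sq_nonneg σ⟩, rfl⟩
  have hv : v ≠ 0 := by rw [← NNReal.coe_ne_zero, hvσ]; positivity
  have hQ₀v : ∀ x y, Q₀ x y = polarGaussianPDF v 0 0 x y := fun x y ↦ by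
    simp [hQ₀, polarGaussianPDF_eq, hvσ]
  have hQv : ∀ Θ x y, Q Θ x y =
      1 / 2 * (polarGaussianPDF v (A * β) Θ x y + polarGaussianPDF v (-(A * β)) Θ x y) :=
    fun Θ x y ↦ by
      simp only [hQ, polarGaussianPDF_eq, hvσ, neg_mul, sub_neg_eq_add]
      ring
  have hexpand : ∀ x y, Q Θt x y * Q Θp x y * Q Θz x y / Q₀ x y ^ 2 =
      ∑ s : Bool × Bool × Bool, 1 / 8 *
        (polarGaussianPDF v (bif s.1 then A * β else -(A * β)) Θt x y *
          polarGaussianPDF v (bif s.2.1 then A * β else -(A * β)) Θp x y *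
          polarGaussianPDF v (bif s.2.2 then A * β else -(A * β)) Θz x y /
          polarGaussianPDF v 0 0 x y ^ 2) := fun x y ↦ by
    simp only [hQv, hQ₀v, Fintype.sum_prod_type, Fintype.sum_bool, cond_true, cond_false]
    ring
  simp only [hexpand]
  rw [integral_integral_finsetSum _ (fun s _ x ↦ ?_) (fun s _ ↦ ?_)]
  · simp only [integral_const_mul, integral_integral_polarGaussianPDF_mul_mul_div_sq hv,
      Fintype.sum_prod_type, Fintype.sum_bool, cond_true, cond_false, hγ, hΔtp, hΔtz, hvσ]
    rw [show Θt - Θp - (Θt - Θz) = -(Θp - Θz) by ring, cos_neg]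
    ring_nf
  · exact (integrable_polarGaussianPDF_mul_mul_div_sq hv _ _ _ _ _ _ x).const_mul _
  · simp only [integral_const_mul]
    exact (integrable_integral_polarGaussianPDF_mul_mul_div_sq hv _ _ _ _ _ _).const_mul _

theorem triple_product_integral (A β σ Θt Θp Θz : ℝ) (hA : 0 < A) (hβ : 0 < β) (hσ : 0 < σ)
    (Q : ℝ → ℝ → ℝ → ℝ) (Q₀ : ℝ → ℝ → ℝ)
    (hQ : Q = fun Θ x y => (1 / 2) * (1 / (2 * Real.pi * σ ^ 2)) *
      (Real.exp (-((x - A * β * Real.cos Θ) ^ 2 + (y - A * β * Real.sin Θ) ^ 2) / (2 * σ ^ 2)) +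
       Real.exp (-((x + A * β * Real.cos Θ) ^ 2 + (y + A * β * Real.sin Θ) ^ 2) / (2 * σ ^ 2))))
    (hQ₀ : Q₀ = fun x y => (1 / (2 * Real.pi * σ ^ 2)) *
      Real.exp (-(x ^ 2 + y ^ 2) / (2 * σ ^ 2)))
    (γ Δtp Δtz : ℝ) (hγ : γ = A ^ 2 * β ^ 2 / σ ^ 2)
    (hΔtp : Δtp = Θt - Θp) (hΔtz : Δtz = Θt - Θz) :
    (∫ x : ℝ, ∫ y : ℝ, Q Θt x y * Q Θp x y * Q Θz x y / (Q₀ x y) ^ 2)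
      = (1 / 4) *
        (Real.exp (-γ * (-Real.cos (Δtp - Δtz) - Real.cos Δtp - Real.cos Δtz)) +
         Real.exp (-γ * (-Real.cos (Δtp - Δtz) + Real.cos Δtp + Real.cos Δtz)) +
         Real.exp (-γ * (Real.cos (Δtp - Δtz) + Real.cos Δtp - Real.cos Δtz)) +
         Real.exp (-γ * (Real.cos (Δtp - Δtz) - Real.cos Δtp + Real.cos Δtz))) :=
  triple_product_integral_general A β σ Θt Θp Θz hσ Q Q₀ hQ hQ₀ γ Δtp Δtz hγ hΔtp hΔtz
end

section
/- Let Q₀ = N(0, σ²I) on ℝ², and for phase angle θ' let Q₁ be the equal mixture of N((Aβcos θ', Aβsin θ'), σ²I) and N((−Aβcos θ', −Aβsin θ'), σ²I). Then ∫∫ Q₁(x,y)²/Q₀(x,y) dx dy = cosh(A²β²/σ²). -/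
open Real MeasureTheory

lemma gauss_integrable (σ : ℝ) (hσ : 0 < σ) :
    Integrable (fun t : ℝ => Real.exp (-t ^ 2 / (2 * σ ^ 2))) := by
  have h : ∀ t : ℝ, -t ^ 2 / (2 * σ ^ 2) = -(1 / (2 * σ ^ 2)) * t ^ 2 := fun t => by ring
  simp_rw [h]
  exact integrable_exp_neg_mul_sq (by positivity)

lemma gauss_integral (σ : ℝ) (hσ : 0 < σ) :
    (∫ t : ℝ, Real.exp (-t ^ 2 / (2 * σ ^ 2))) = σ * Real.sqrt (2 * Real.pi) := by
  have h : ∀ t : ℝ, -t ^ 2 / (2 * σ ^ 2) = -(1 / (2 * σ ^ 2)) * t ^ 2 := fun t => by ring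
  simp_rw [h, integral_gaussian]
  rw [show Real.pi / (1 / (2 * σ ^ 2)) = σ ^ 2 * (2 * Real.pi) by field_simp]
  rw [Real.sqrt_mul (by positivity), Real.sqrt_sq hσ.le]

lemma gauss_integrable_shift (σ : ℝ) (hσ : 0 < σ) (m : ℝ) :
    Integrable (fun t : ℝ => Real.exp (-(t - m) ^ 2 / (2 * σ ^ 2))) :=
  (gauss_integrable σ hσ).comp_sub_right m

lemma gauss_integral_shift (σ : ℝ) (hσ : 0 < σ) (m : ℝ) :
    (∫ t : ℝ, Real.exp (-(t - m) ^ 2 / (2 * σ ^ 2))) = σ * Real.sqrt (2 * Real.pi) := by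
  rw [MeasureTheory.integral_sub_right_eq_self
    (fun t : ℝ => Real.exp (-t ^ 2 / (2 * σ ^ 2))) m]
  exact gauss_integral σ hσ

theorem self_integral_cosh (A β σ θ' : ℝ) (hA : 0 < A) (hβ : 0 < β) (hσ : 0 < σ)
    (Q₀ Q₁ : ℝ → ℝ → ℝ)
    (hQ₀ : Q₀ = fun x y => (1 / (2 * Real.pi * σ ^ 2)) *
      Real.exp (-(x ^ 2 + y ^ 2) / (2 * σ ^ 2)))
    (hQ₁ : Q₁ = fun x y => (1 / 2) * (1 / (2 * Real.pi * σ ^ 2)) *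
      (Real.exp (-((x - A * β * Real.cos θ') ^ 2 + (y - A * β * Real.sin θ') ^ 2) / (2 * σ ^ 2)) +
       Real.exp (-((x + A * β * Real.cos θ') ^ 2 + (y + A * β * Real.sin θ') ^ 2) / (2 * σ ^ 2)))) :
    (∫ x : ℝ, ∫ y : ℝ, (Q₁ x y) ^ 2 / Q₀ x y) = Real.cosh (A ^ 2 * β ^ 2 / σ ^ 2) := by
  subst hQ₀ hQ₁
  have hπ : 0 < Real.pi := Real.pi_pos
  have trig : Real.cos θ' ^ 2 + Real.sin θ' ^ 2 = 1 := Real.cos_sq_add_sin_sq θ'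
  set c := A * β * Real.cos θ' with hc
  set s := A * β * Real.sin θ' with hs
  have hcs : c ^ 2 + s ^ 2 = A ^ 2 * β ^ 2 := by
    rw [hc, hs]; linear_combination (A ^ 2 * β ^ 2) * trig
  set g : ℝ := 1 / (2 * Real.pi * σ ^ 2) with hg
  set r : ℝ := A ^ 2 * β ^ 2 / σ ^ 2 with hr
  set e : ℝ → ℝ := fun t => Real.exp (-t ^ 2 / (2 * σ ^ 2)) with he
  have hg0 : g ≠ 0 := by rw [hg]; positivity
  -- pointwise identity
  have key : ∀ x y : ℝ,
      ((1 : ℝ) / 2 * g *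
        (Real.exp (-((x - c) ^ 2 + (y - s) ^ 2) / (2 * σ ^ 2)) +
         Real.exp (-((x + c) ^ 2 + (y + s) ^ 2) / (2 * σ ^ 2)))) ^ 2 /
        (g * Real.exp (-(x ^ 2 + y ^ 2) / (2 * σ ^ 2))) =
      g * (Real.exp r / 4 * (e (x - 2 * c) * e (y - 2 * s) + e (x + 2 * c) * e (y + 2 * s)) +
        Real.exp (-r) / 2 * (e x * e y)) := by
    intro x y
    have hB : Real.exp (-(x ^ 2 + y ^ 2) / (2 * σ ^ 2)) ≠ 0 := Real.exp_ne_zero _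
    rw [div_eq_iff (by positivity)]
    have h1 : Real.exp (-((x - c) ^ 2 + (y - s) ^ 2) / (2 * σ ^ 2)) ^ 2 =
        Real.exp (-(x ^ 2 + y ^ 2) / (2 * σ ^ 2)) *
          (Real.exp r * (e (x - 2 * c) * e (y - 2 * s))) := by
      simp only [he]
      rw [sq, ← Real.exp_add, ← Real.exp_add, ← Real.exp_add, ← Real.exp_add]
      congr 1
      rw [hr]
      linear_combination (1 / σ ^ 2) * hcs
    have h2 : Real.exp (-((x + c) ^ 2 + (y + s) ^ 2) / (2 * σ ^ 2)) ^ 2 =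
        Real.exp (-(x ^ 2 + y ^ 2) / (2 * σ ^ 2)) *
          (Real.exp r * (e (x + 2 * c) * e (y + 2 * s))) := by
      simp only [he]
      rw [sq, ← Real.exp_add, ← Real.exp_add, ← Real.exp_add, ← Real.exp_add]
      congr 1
      rw [hr]
      linear_combination (1 / σ ^ 2) * hcs
    have h3 : Real.exp (-((x - c) ^ 2 + (y - s) ^ 2) / (2 * σ ^ 2)) *
        Real.exp (-((x + c) ^ 2 + (y + s) ^ 2) / (2 * σ ^ 2)) =
        Real.exp (-(x ^ 2 + y ^ 2) / (2 * σ ^ 2)) *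
          (Real.exp (-r) * (e x * e y)) := by
      simp only [he]
      rw [← Real.exp_add, ← Real.exp_add, ← Real.exp_add, ← Real.exp_add]
      congr 1
      rw [hr]
      linear_combination (-1 / σ ^ 2) * hcs
    linear_combination (g ^ 2 / 4) * h1 + (g ^ 2 / 4) * h2 + (g ^ 2 / 2) * h3
  simp only [key]
  -- integrability of pieces
  have i0 : Integrable (fun t : ℝ => e t) := gauss_integrable σ hσ
  have iP : ∀ m : ℝ, Integrable (fun t : ℝ => e (t - m)) := fun m =>
    gauss_integrable_shift σ hσ m
  have iM : ∀ m : ℝ, Integrable (fun t : ℝ => e (t + m)) := fun m => by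
    have := gauss_integrable_shift σ hσ (-m)
    simpa [sub_neg_eq_add] using this
  have intP : ∀ m : ℝ, (∫ t : ℝ, e (t - m)) = σ * Real.sqrt (2 * Real.pi) := fun m =>
    gauss_integral_shift σ hσ m
  have intM : ∀ m : ℝ, (∫ t : ℝ, e (t + m)) = σ * Real.sqrt (2 * Real.pi) := fun m => by
    have := gauss_integral_shift σ hσ (-m)
    simpa [sub_neg_eq_add] using this
  set L : ℝ := σ * Real.sqrt (2 * Real.pi) with hL
  have int0 : (∫ t : ℝ, e t) = L := gauss_integral σ hσ
  have inner : ∀ x : ℝ,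
      (∫ y : ℝ, g * (Real.exp r / 4 * (e (x - 2 * c) * e (y - 2 * s) + e (x + 2 * c) * e (y + 2 * s)) +
        Real.exp (-r) / 2 * (e x * e y))) =
      L * (g * (Real.exp r / 4 * (e (x - 2 * c) + e (x + 2 * c)) + Real.exp (-r) / 2 * e x)) := by
    intro x
    have hfun : (fun y : ℝ => g * (Real.exp r / 4 * (e (x - 2 * c) * e (y - 2 * s) + e (x + 2 * c) * e (y + 2 * s)) +
        Real.exp (-r) / 2 * (e x * e y))) =
        fun y : ℝ => (g * Real.exp r / 4 * e (x - 2 * c)) * e (y - 2 * s) +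
          ((g * Real.exp r / 4 * e (x + 2 * c)) * e (y + 2 * s) +
           (g * Real.exp (-r) / 2 * e x) * e y) := by
      funext y; ring
    have I1 : Integrable (fun y : ℝ => (g * Real.exp r / 4 * e (x - 2 * c)) * e (y - 2 * s)) :=
      (iP (2*s)).const_mul _
    have I2 : Integrable (fun y : ℝ => (g * Real.exp r / 4 * e (x + 2 * c)) * e (y + 2 * s)) :=
      (iM (2*s)).const_mul _
    have I3 : Integrable (fun y : ℝ => (g * Real.exp (-r) / 2 * e x) * e y) :=
      i0.const_mul _
    have I23 : Integrable (fun y : ℝ => (g * Real.exp r / 4 * e (x + 2 * c)) * e (y + 2 * s) +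
        (g * Real.exp (-r) / 2 * e x) * e y) := I2.add I3
    rw [hfun, integral_add I1 I23, integral_add I2 I3,
      MeasureTheory.integral_const_mul _ _, MeasureTheory.integral_const_mul _ _, MeasureTheory.integral_const_mul _ _,
      intP (2*s), intM (2*s), int0]
    ring
  simp only [inner]
  have hfun2 : (fun x : ℝ => L * (g * (Real.exp r / 4 * (e (x - 2 * c) + e (x + 2 * c)) +
      Real.exp (-r) / 2 * e x))) =
      fun x : ℝ => (L * g * Real.exp r / 4) * e (x - 2 * c) +
        ((L * g * Real.exp r / 4) * e (x + 2 * c) + (L * g * Real.exp (-r) / 2) * e x) := by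
    funext x; ring
  have J1 : Integrable (fun x : ℝ => (L * g * Real.exp r / 4) * e (x - 2 * c)) :=
    (iP (2*c)).const_mul _
  have J2 : Integrable (fun x : ℝ => (L * g * Real.exp r / 4) * e (x + 2 * c)) :=
    (iM (2*c)).const_mul _
  have J3 : Integrable (fun x : ℝ => (L * g * Real.exp (-r) / 2) * e x) :=
    i0.const_mul _
  have J23 : Integrable (fun x : ℝ => (L * g * Real.exp r / 4) * e (x + 2 * c) +
      (L * g * Real.exp (-r) / 2) * e x) := J2.add J3
  rw [hfun2, integral_add J1 J23, integral_add J2 J3,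
    MeasureTheory.integral_const_mul _ _, MeasureTheory.integral_const_mul _ _, MeasureTheory.integral_const_mul _ _,
    intP (2*c), intM (2*c), int0]
  have hL2 : L ^ 2 = σ ^ 2 * (2 * Real.pi) := by
    rw [hL, mul_pow, Real.sq_sqrt (by positivity)]
  have hLg : L * L * g = 1 := by
    rw [hg]
    have : L * L = σ ^ 2 * (2 * Real.pi) := by rw [← sq]; exact hL2
    rw [this]; field_simp
  rw [Real.cosh_eq]
  field_simp
  nlinarith [hLg, Real.exp_pos r, Real.exp_pos (-r), sq_nonneg L]
end
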